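/- Let D ⊆ ℝⁿ (n ≥ 2) be open, let w : D → ℝ be C² with Δw = 0, ∇w(x) ≠ 0 and Δ_∞ w(x) ≥ 0 for all x ∈ D, let f : ℝ → ℝ be C² with f'(t) > 0 and f''(t) ≥ 0 for all t, and let F : [0,∞) → ℝ be C² with F'(t) > 0 and F''(t) > 0 for t > 0; set H(t) = F'(t)/t and R(t) = F''(t)/F'(t). If at every point of D one has f''(w) · R(f'(w)|∇w|) ≥ |∇w|^{-5} · Δ_∞ w, then div(H(|∇(f∘w)|)∇(f∘w)) ≥ 0 everywhere in D, i.e. f∘w is a classical subsolution of the equation Δ_H u = 0. -/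

import Mathlib

open Set Filter MeasureTheory
open scoped RealInnerProductSpace Topology
noncomputable section

/-- The Laplacian of a scalar function on `ℝⁿ`, as sum of pure second derivatives. -/
def laplacian {n : ℕ} (u : EuclideanSpace ℝ (Fin n) → ℝ) (x : EuclideanSpace ℝ (Fin n)) : ℝ :=
  ∑ i, fderiv ℝ (fun y => fderiv ℝ u y (EuclideanSpace.single i 1)) x (EuclideanSpace.single i 1)

/-- The divergence of a vector field on `ℝⁿ`. -/
def divergence {n : ℕ} (X : EuclideanSpace ℝ (Fin n) → EuclideanSpace ℝ (Fin n))
    (x : EuclideanSpace ℝ (Fin n)) : ℝ :=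
  ∑ i, fderiv ℝ X x (EuclideanSpace.single i 1) i

/-- The `∞`-Laplacian `Δ_∞ u = ⟨∇u, (D²u) ∇u⟩`. -/
def inftyLaplacian {n : ℕ} (u : EuclideanSpace ℝ (Fin n) → ℝ)
    (x : EuclideanSpace ℝ (Fin n)) : ℝ :=
  ⟪gradient u x, fderiv ℝ (gradient u) x (gradient u x)⟫

/-- `H(t) = F'(t)/t`. -/
def Hfun (F : ℝ → ℝ) : ℝ → ℝ := fun t => deriv F t / t

/-- `R(t) = F''(t)/F'(t)`. -/
def Rfun (F : ℝ → ℝ) : ℝ → ℝ := fun t => deriv (deriv F) t / deriv F t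

/-! With `u = f ∘ w` one has `∇u = f'(w) ∇w`, so `s := |∇u| = f'(w) |∇w|`. Expanding
`div(Φ(|∇u|) ∇u) = Φ(s) Δu + Φ'(s) Δ_∞u / s` and inserting `Δu = f'' |∇w|²` (as `Δw = 0`) and
`Δ_∞u = f'³ Δ_∞w + f'² f'' |∇w|⁴`, the two terms carrying `F'(s) f''` cancel for `Φ = H` and
`Δ_H u = F''(s) (f' Δ_∞w / |∇w|² + f'' |∇w|²) - F'(s) Δ_∞w / |∇w|³`.
The first summand is nonnegative because `Δ_∞w ≥ 0`, and the hypothesis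
`f'' R(s) ≥ |∇w|⁻⁵ Δ_∞w` says exactly that `F''(s) f'' |∇w|² ≥ F'(s) Δ_∞w / |∇w|³`. -/

namespace EuclideanSpace

variable {n : ℕ}

lemma sum_apply_single_mul (T : EuclideanSpace ℝ (Fin n) →L[ℝ] ℝ) (v : EuclideanSpace ℝ (Fin n)) :
    ∑ i, T (single i 1) * v i = T v := by
  conv_rhs => rw [← (basisFun (Fin n) ℝ).sum_repr v]
  simp [mul_comm]

end EuclideanSpace

open EuclideanSpace

section

variable {n : ℕ} {x : EuclideanSpace ℝ (Fin n)} {w : EuclideanSpace ℝ (Fin n) → ℝ} {f : ℝ → ℝ}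

lemma fderiv_apply_single_eq_gradient_apply (u : EuclideanSpace ℝ (Fin n) → ℝ)
    (y : EuclideanSpace ℝ (Fin n)) (i : Fin n) :
    fderiv ℝ u y (single i 1) = gradient u y i := by
  rw [← toDual_gradient, InnerProductSpace.toDual_apply_apply, inner_single_right]
  simp

lemma fderiv_apply_gradient_self (u : EuclideanSpace ℝ (Fin n) → ℝ) (y : EuclideanSpace ℝ (Fin n)) :
    fderiv ℝ u y (gradient u y) = ‖gradient u y‖ ^ 2 := by
  rw [← inner_gradient_left, real_inner_self_eq_norm_sq]

lemma ContDiffAt.differentiableAt_gradient {u : EuclideanSpace ℝ (Fin n) → ℝ}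
    (hu : ContDiffAt ℝ 2 u x) : DifferentiableAt ℝ (gradient u) x :=
  (InnerProductSpace.toDual ℝ _).symm.differentiableAt.comp x
    ((hu.fderiv_right (m := 1) (by norm_num)).differentiableAt one_ne_zero)

lemma HasFDerivAt.divergence_smul {φ : EuclideanSpace ℝ (Fin n) → ℝ}
    {φ' : EuclideanSpace ℝ (Fin n) →L[ℝ] ℝ}
    {V : EuclideanSpace ℝ (Fin n) → EuclideanSpace ℝ (Fin n)}
    {V' : EuclideanSpace ℝ (Fin n) →L[ℝ] EuclideanSpace ℝ (Fin n)}
    (hφ : HasFDerivAt φ φ' x) (hV : HasFDerivAt V V' x) :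
    divergence (fun y => φ y • V y) x = φ x * divergence V x + φ' (V x) := by
  have hφV : HasFDerivAt (fun y => φ y • V y) (φ x • V' + φ'.smulRight (V x)) x := hφ.smul hV
  rw [divergence, divergence, hφV.fderiv, hV.fderiv, ← sum_apply_single_mul,
    Finset.mul_sum, ← Finset.sum_add_distrib]
  simp

lemma laplacian_eq_divergence_gradient {u : EuclideanSpace ℝ (Fin n) → ℝ}
    (hu : DifferentiableAt ℝ (gradient u) x) :
    laplacian u x = divergence (gradient u) x := by
  refine Finset.sum_congr rfl fun i _ => ?_
  simp only [fderiv_apply_single_eq_gradient_apply u]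
  have hi : HasFDerivAt (fun y => gradient u y i) ((proj i).comp (fderiv ℝ (gradient u) x)) x :=
    (proj (𝕜 := ℝ) i).hasFDerivAt.comp x hu.hasFDerivAt
  rw [hi.fderiv]
  rfl

lemma HasFDerivAt.norm {G F : Type*} [NormedAddCommGroup G] [NormedSpace ℝ G]
    [NormedAddCommGroup F] [InnerProductSpace ℝ F] {g : G → F} {g' : G →L[ℝ] F} {y : G}
    (hg : HasFDerivAt g g' y) (h0 : g y ≠ 0) :
    HasFDerivAt (fun z => ‖g z‖) (‖g y‖⁻¹ • (innerSL ℝ (g y)).comp g') y := by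
  have hsq : ‖g y‖ ^ 2 ≠ 0 := by positivity
  convert hg.norm_sq.sqrt hsq using 1
  · simp [Real.sqrt_sq (norm_nonneg _)]
  · ext v
    simp [Real.sqrt_sq (norm_nonneg _)]
    field_simp

theorem divergence_smul_gradient {u : EuclideanSpace ℝ (Fin n) → ℝ} {Φ : ℝ → ℝ} {Φ' : ℝ}
    (hΦ : HasDerivAt Φ Φ' ‖gradient u x‖) (hu : DifferentiableAt ℝ (gradient u) x)
    (h0 : gradient u x ≠ 0) :
    divergence (fun y => Φ ‖gradient u y‖ • gradient u y) x =
      Φ ‖gradient u x‖ * laplacian u x + Φ' * inftyLaplacian u x / ‖gradient u x‖ := by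
  have hΦN : HasFDerivAt (fun y => Φ ‖gradient u y‖) _ x :=
    hΦ.comp_hasFDerivAt x (hu.hasFDerivAt.norm h0)
  rw [hΦN.divergence_smul hu.hasFDerivAt, laplacian_eq_divergence_gradient hu, inftyLaplacian]
  simp
  ring

lemma gradient_comp {y : EuclideanSpace ℝ (Fin n)} (hf : DifferentiableAt ℝ f (w y))
    (hw : DifferentiableAt ℝ w y) : gradient (f ∘ w) y = deriv f (w y) • gradient w y := by
  rw [gradient, (hf.hasDerivAt.comp_hasFDerivAt y hw.hasFDerivAt).fderiv, map_smul]
  rfl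

lemma gradient_comp_eventuallyEq (hf : Differentiable ℝ f)
    (hw : ∀ᶠ y in 𝓝 x, DifferentiableAt ℝ w y) :
    gradient (f ∘ w) =ᶠ[𝓝 x] fun y => deriv f (w y) • gradient w y :=
  hw.mono fun _ hy => gradient_comp (hf _) hy

lemma hasFDerivAt_gradient_comp {f'' : ℝ} (hf : Differentiable ℝ f)
    (hf' : HasDerivAt (deriv f) f'' (w x)) (hw : ∀ᶠ y in 𝓝 x, DifferentiableAt ℝ w y)
    (hgw : DifferentiableAt ℝ (gradient w) x) :
    HasFDerivAt (gradient (f ∘ w))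
      (deriv f (w x) • fderiv ℝ (gradient w) x + (f'' • fderiv ℝ w x).smulRight (gradient w x))
      x :=
  ((hf'.comp_hasFDerivAt x hw.self_of_nhds.hasFDerivAt).smul hgw.hasFDerivAt).congr_of_eventuallyEq
    (gradient_comp_eventuallyEq hf hw)

lemma laplacian_comp {f'' : ℝ} (hf : Differentiable ℝ f)
    (hf' : HasDerivAt (deriv f) f'' (w x)) (hw : ∀ᶠ y in 𝓝 x, DifferentiableAt ℝ w y)
    (hgw : DifferentiableAt ℝ (gradient w) x) :
    laplacian (f ∘ w) x = deriv f (w x) * laplacian w x + f'' * ‖gradient w x‖ ^ 2 := by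
  have hφ : HasFDerivAt (fun y => deriv f (w y)) (f'' • fderiv ℝ w x) x :=
    hf'.comp_hasFDerivAt x hw.self_of_nhds.hasFDerivAt
  rw [laplacian_eq_divergence_gradient (hasFDerivAt_gradient_comp hf hf' hw hgw).differentiableAt,
    divergence, (gradient_comp_eventuallyEq hf hw).fderiv_eq, ← divergence,
    hφ.divergence_smul hgw.hasFDerivAt, laplacian_eq_divergence_gradient hgw]
  simp [fderiv_apply_gradient_self]

lemma inftyLaplacian_comp {f'' : ℝ} (hf : Differentiable ℝ f)
    (hf' : HasDerivAt (deriv f) f'' (w x)) (hw : ∀ᶠ y in 𝓝 x, DifferentiableAt ℝ w y)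
    (hgw : DifferentiableAt ℝ (gradient w) x) :
    inftyLaplacian (f ∘ w) x =
      deriv f (w x) ^ 3 * inftyLaplacian w x + deriv f (w x) ^ 2 * f'' * ‖gradient w x‖ ^ 4 := by
  rw [inftyLaplacian, (hasFDerivAt_gradient_comp hf hf' hw hgw).fderiv,
    gradient_comp (hf _) hw.self_of_nhds, inftyLaplacian]
  simp [fderiv_apply_gradient_self, inner_add_right, real_inner_smul_left, real_inner_smul_right]
  ring

lemma hasDerivAt_Hfun {F : ℝ → ℝ} {t : ℝ} (hF : ContDiffAt ℝ 2 F t) (ht : t ≠ 0) :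
    HasDerivAt (Hfun F) ((deriv (deriv F) t * t - deriv F t) / t ^ 2) t := by
  have hF' : DifferentiableAt ℝ (deriv F) t :=
    (hF.derivWithin (m := 1) (by norm_num)).differentiableAt one_ne_zero
  have h := hF'.hasDerivAt.div (hasDerivAt_id t) ht
  simp only [id, mul_one] at h
  exact h

theorem divergence_Hfun_gradient_comp {F : ℝ → ℝ} {f'' : ℝ}
    (hF : ContDiffAt ℝ 2 F (deriv f (w x) * ‖gradient w x‖))
    (hf : Differentiable ℝ f) (hf' : HasDerivAt (deriv f) f'' (w x)) (hfpos : 0 < deriv f (w x))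
    (hw : ∀ᶠ y in 𝓝 x, DifferentiableAt ℝ w y) (hgw : DifferentiableAt ℝ (gradient w) x)
    (hharm : laplacian w x = 0) (h0 : gradient w x ≠ 0) :
    divergence (fun y => Hfun F ‖gradient (f ∘ w) y‖ • gradient (f ∘ w) y) x =
      deriv (deriv F) (deriv f (w x) * ‖gradient w x‖) *
          (deriv f (w x) * inftyLaplacian w x / ‖gradient w x‖ ^ 2 + f'' * ‖gradient w x‖ ^ 2) -
        deriv F (deriv f (w x) * ‖gradient w x‖) * inftyLaplacian w x / ‖gradient w x‖ ^ 3 := by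
  have hgrad : gradient (f ∘ w) x = deriv f (w x) • gradient w x :=
    gradient_comp (hf _) hw.self_of_nhds
  have hnorm : ‖gradient (f ∘ w) x‖ = deriv f (w x) * ‖gradient w x‖ := by
    rw [hgrad, norm_smul, Real.norm_of_nonneg hfpos.le]
  have hm : 0 < ‖gradient w x‖ := norm_pos_iff.mpr h0
  have hH := hasDerivAt_Hfun hF (by positivity)
  rw [← hnorm] at hH
  rw [divergence_smul_gradient hH (hasFDerivAt_gradient_comp hf hf' hw hgw).differentiableAt
      (by rw [hgrad]; exact smul_ne_zero hfpos.ne' h0),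
    laplacian_comp hf hf' hw hgw, inftyLaplacian_comp hf hf' hw hgw, hharm, hnorm, Hfun]
  field_simp
  ring

end

lemma subsolution_inequality {a m b P Q I : ℝ} (ha : 0 < a) (hm : 0 < m) (hP : 0 < P)
    (hQ : 0 ≤ Q) (hI : 0 ≤ I) (hkey : m ^ (-5 : ℤ) * I ≤ b * (Q / P)) :
    0 ≤ Q * (a * I / m ^ 2 + b * m ^ 2) - P * I / m ^ 3 := by
  have hPI : P * I / m ^ 5 ≤ b * Q := by
    rw [zpow_neg, zpow_ofNat, inv_mul_eq_div, mul_div_assoc', div_le_div_iff₀ (by positivity) hP]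
      at hkey
    rw [div_le_iff₀ (by positivity)]
    linarith
  have hsplit : Q * (a * I / m ^ 2 + b * m ^ 2) - P * I / m ^ 3 =
      Q * a * I / m ^ 2 + m ^ 2 * (b * Q - P * I / m ^ 5) := by
    field_simp
    ring
  rw [hsplit]
  exact add_nonneg (by positivity) (mul_nonneg (by positivity) (sub_nonneg.mpr hPI))

theorem statement2_general {n : ℕ}
    (D : Set (EuclideanSpace ℝ (Fin n))) (hD : IsOpen D)
    (w : EuclideanSpace ℝ (Fin n) → ℝ) (hw : ContDiffOn ℝ 2 w D)
    (hharm : ∀ x ∈ D, laplacian w x = 0)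
    (hgrad : ∀ x ∈ D, gradient w x ≠ 0)
    (hinfty : ∀ x ∈ D, 0 ≤ inftyLaplacian w x)
    (f : ℝ → ℝ) (hf : ContDiff ℝ 2 f)
    (hf' : ∀ t : ℝ, 0 < deriv f t)
    (F : ℝ → ℝ) (hF : ContDiffOn ℝ 2 F (Ici 0))
    (hF' : ∀ t > (0:ℝ), 0 < deriv F t) (hF'' : ∀ t > (0:ℝ), 0 < deriv (deriv F) t)
    (hkey : ∀ x ∈ D,
      ‖gradient w x‖ ^ (-5 : ℤ) * inftyLaplacian w x ≤
        deriv (deriv f) (w x) * Rfun F (deriv f (w x) * ‖gradient w x‖)) :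
    ∀ x ∈ D,
      0 ≤ divergence (fun y => Hfun F ‖gradient (f ∘ w) y‖ • gradient (f ∘ w) y) x := by
  intro x hx
  have hw2 : ∀ y ∈ D, ContDiffAt ℝ 2 w y := fun y hy => hw.contDiffAt (hD.mem_nhds hy)
  have hm : 0 < ‖gradient w x‖ := norm_pos_iff.mpr (hgrad x hx)
  have hs : 0 < deriv f (w x) * ‖gradient w x‖ := mul_pos (hf' _) hm
  rw [divergence_Hfun_gradient_comp (hF.contDiffAt (Ici_mem_nhds hs))
    (hf.differentiable two_ne_zero) (hf.differentiable_deriv_two _).hasDerivAt (hf' _)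
    ((hD.eventually_mem hx).mono fun y hy => (hw2 y hy).differentiableAt two_ne_zero)
    (hw2 x hx).differentiableAt_gradient (hharm x hx) (hgrad x hx)]
  exact subsolution_inequality (hf' _) hm (hF' _ hs) (hF'' _ hs).le (hinfty x hx) (hkey x hx)

/-- If `w` is harmonic in `D` with `∇w ≠ 0` and `Δ_∞ w ≥ 0` in `D`,
`f` is `C²` with `f' > 0`, `f'' ≥ 0`, and `f''(w) R(f'(w)|∇w|) ≥ |∇w|⁻⁵ Δ_∞ w` in `D`,
then `f ∘ w` is a classical subsolution: `div(H(|∇(f∘w)|)∇(f∘w)) ≥ 0` everywhere in `D`. -/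
theorem statement2 {n : ℕ} (hn : 2 ≤ n)
    (D : Set (EuclideanSpace ℝ (Fin n))) (hD : IsOpen D)
    (w : EuclideanSpace ℝ (Fin n) → ℝ) (hw : ContDiffOn ℝ 2 w D)
    (hharm : ∀ x ∈ D, laplacian w x = 0)
    (hgrad : ∀ x ∈ D, gradient w x ≠ 0)
    (hinfty : ∀ x ∈ D, 0 ≤ inftyLaplacian w x)
    (f : ℝ → ℝ) (hf : ContDiff ℝ 2 f)
    (hf' : ∀ t : ℝ, 0 < deriv f t) (hf'' : ∀ t : ℝ, 0 ≤ deriv (deriv f) t)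
    (F : ℝ → ℝ) (hF : ContDiffOn ℝ 2 F (Ici 0))
    (hF' : ∀ t > (0:ℝ), 0 < deriv F t) (hF'' : ∀ t > (0:ℝ), 0 < deriv (deriv F) t)
    (hkey : ∀ x ∈ D,
      ‖gradient w x‖ ^ (-5 : ℤ) * inftyLaplacian w x ≤
        deriv (deriv f) (w x) * Rfun F (deriv f (w x) * ‖gradient w x‖)) :
    ∀ x ∈ D,
      0 ≤ divergence (fun y => Hfun F ‖gradient (f ∘ w) y‖ • gradient (f ∘ w) y) x :=
  statement2_general D hD w hw hharm hgrad hinfty f hf hf' F hF hF' hF'' hkey
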